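/- If the trajectory balance loss L_TB(τ, θ) = (log(Z_θ P_F(τ;θ)/(R(x_τ) P_B(τ;θ))))² is zero for all trajectories τ ∈ T, then the trajectory distribution induced by P_F equals the distribution P*(τ) = R(x_τ)P_B(τ;θ)/Z where Z = Σ_x R(x), i.e., P_F(τ;θ) = R(x_τ)P_B(τ;θ)/Z_θ for all τ, and Z_θ = Z. -/

import Mathlib

/-- If the trajectory balance loss is zero on all trajectories, the forward
trajectory distribution equals `τ ↦ R(term τ)·PB(τ)/Z_θ` and `Z_θ = Σ_x R x`. -/
theorem stmt_12 {X T : Type*} [Fintype X] [Fintype T] [DecidableEq X]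
    (term : T → X) (PF PB : T → ℝ) (R : X → ℝ) (Zθ : ℝ)
    (hR : ∀ x, 0 < R x) (hZθ : 0 < Zθ)
    (hPF : ∀ τ, 0 < PF τ) (hPB : ∀ τ, 0 < PB τ)
    (hPFsum : ∑ τ, PF τ = 1)
    (hPBsum : ∀ x, ∑ τ ∈ Finset.univ.filter (fun τ => term τ = x), PB τ = 1)
    (hloss : ∀ τ, (Real.log (Zθ * PF τ / (R (term τ) * PB τ)))^2 = 0) :
    (∀ τ, PF τ = R (term τ) * PB τ / Zθ) ∧ Zθ = ∑ x, R x := by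
  have key : ∀ τ, PF τ = R (term τ) * PB τ / Zθ := by
    intro τ
    have h := hloss τ
    have hlog : Real.log (Zθ * PF τ / (R (term τ) * PB τ)) = 0 := by
      nlinarith [sq_nonneg (Real.log (Zθ * PF τ / (R (term τ) * PB τ)))]
    have h1' := hR (term τ); have h2' := hPB τ; have h3' := hPF τ
    have hpos : 0 < Zθ * PF τ / (R (term τ) * PB τ) := by positivity
    have h1 : Zθ * PF τ / (R (term τ) * PB τ) = 1 := by
      rcases Real.log_eq_zero.mp hlog with h | h | h
      · exact absurd h (ne_of_gt hpos)
      · exact h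
      · linarith
    have hden : R (term τ) * PB τ ≠ 0 := by positivity
    field_simp at h1 ⊢
    linarith
  refine ⟨key, ?_⟩
  have : (1 : ℝ) = (∑ x, R x) / Zθ := by
    calc (1 : ℝ) = ∑ τ, PF τ := hPFsum.symm
    _ = ∑ τ, R (term τ) * PB τ / Zθ := by simp_rw [key]
    _ = ∑ x, ∑ τ ∈ Finset.univ.filter (fun τ => term τ = x), R (term τ) * PB τ / Zθ := by
        exact (Finset.sum_fiberwise _ _ _).symm
    _ = ∑ x, R x / Zθ := by
        refine Finset.sum_congr rfl fun x _ => ?_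
        have : ∑ τ ∈ Finset.univ.filter (fun τ => term τ = x), R (term τ) * PB τ / Zθ
            = ∑ τ ∈ Finset.univ.filter (fun τ => term τ = x), R x * PB τ / Zθ := by
          refine Finset.sum_congr rfl fun τ hτ => ?_
          rw [(Finset.mem_filter.mp hτ).2]
        rw [this]
        have h2 := hPBsum x
        field_simp
        rw [← Finset.sum_div, ← Finset.mul_sum, h2, mul_one, mul_comm, div_mul_cancel₀]
        exact ne_of_gt hZθ
    _ = (∑ x, R x) / Zθ := by rw [Finset.sum_div]
  field_simp at this
  linarith
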